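/- For σ ∈ (1,2) and c > 0, with A_σ = ∫_ℝ(x²+1)^{-1/σ}dx, B_σ = ∫_ℝ(x²+1)^{-1/σ-1}dx, M(c) = (1/2)σ^{-1}(2σ+2)^{1/σ} A_σ c^{1/σ-1}, and P(c) = -(c/2)M(c) + (1/2)σ^{-1}(2σ+2)^{1/σ} B_σ c^{1/σ}, the quantity -(c/2)M'(c) - P'(c) equals (1/4)σ^{-2}(2σ+2)^{1/σ}·2(σ-1)·A_σ·c^{1/σ-1}, which is strictly positive. -/

import Mathlib

/-!
Integrating by parts against `x` gives
`∫ (x² + 1)^(-1/σ - 1) = (1 - σ/2) ∫ (x² + 1)^(-1/σ)`,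
i.e. `B_σ = (1 - σ/2) A_σ`. Since `P(c) = -(c/2) M(c) + K c^(1/σ)`, the terms `(c/2) M'(c)`
cancel and `-(c/2) M' - P' = M/2 - (K/σ) c^(1/σ - 1)`; with
`K = (1 - σ/2) (2σ)⁻¹ (2σ+2)^(1/σ) A_σ` this is the stated multiple of `(σ - 1) A_σ`,
positive because `σ > 1` and `A_σ > 0`.
-/

open MeasureTheory

noncomputable def Aσ (σ : ℝ) : ℝ := ∫ x : ℝ, (x^2 + 1) ^ (-(1/σ))
noncomputable def Bσ (σ : ℝ) : ℝ := ∫ x : ℝ, (x^2 + 1) ^ (-(1/σ) - 1)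

noncomputable def Mass (σ c : ℝ) : ℝ := (1/2) * σ⁻¹ * (2*σ+2) ^ (1/σ) * Aσ σ * c ^ (1/σ - 1)

noncomputable def Mom (σ c : ℝ) : ℝ :=
  -(c/2) * Mass σ c + (1/2) * σ⁻¹ * (2*σ+2) ^ (1/σ) * Bσ σ * c ^ (1/σ)

open Filter Topology

section PowerOfSqAddOne

variable {p : ℝ}

lemma integrable_rpow_neg_sq_add_one (hp : 1/2 < p) :
    Integrable fun x : ℝ => (x^2 + 1) ^ (-p) := by
  have h := integrable_rpow_neg_one_add_norm_sq (E := ℝ) (μ := volume) (r := 2*p)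
    (by simp only [Module.finrank_self, Nat.cast_one]; linarith)
  refine h.congr (.of_forall fun x => ?_)
  simp only [Real.norm_eq_abs, sq_abs, add_comm (1:ℝ)]
  ring_nf

lemma integral_rpow_neg_sq_add_one_pos (hp : 1/2 < p) :
    0 < ∫ x : ℝ, (x^2 + 1) ^ (-p) := by
  have hpos : ∀ x : ℝ, 0 < (x^2 + 1) ^ (-p) := fun x => by positivity
  rw [integral_pos_iff_support_of_nonneg (fun x => (hpos x).le)
    (integrable_rpow_neg_sq_add_one hp), Function.support_eq_univ fun x => (hpos x).ne']
  simp

lemma hasDerivAt_mul_rpow_neg_sq_add_one (p x : ℝ) :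
    HasDerivAt (fun x : ℝ => x * (x^2 + 1) ^ (-p))
      ((1 - 2*p) * (x^2 + 1) ^ (-p) + 2*p * (x^2 + 1) ^ (-p - 1)) x := by
  have hx : (0:ℝ) < x^2 + 1 := by positivity
  have hsq : HasDerivAt (fun x : ℝ => x^2 + 1) (2*x) x := by
    simpa using (hasDerivAt_pow 2 x).add_const 1
  have hshift : (x^2 + 1) ^ (-p - 1) * (x^2 + 1) = (x^2 + 1) ^ (-p) := by
    rw [← Real.rpow_add_one hx.ne', sub_add_cancel]
  refine ((hasDerivAt_id' x).mul (hsq.rpow_const (p := -p) (Or.inl hx.ne'))).congr_deriv ?_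
  linear_combination -(2*p) * hshift

lemma tendsto_mul_rpow_neg_sq_add_one_atTop (hp : 1/2 < p) :
    Tendsto (fun x : ℝ => x * (x^2 + 1) ^ (-p)) atTop (𝓝 0) := by
  refine squeeze_zero' (g := fun x : ℝ => x ^ (1 - 2*p)) ?_ ?_ ?_
  · filter_upwards [eventually_ge_atTop 0] with x hx
    positivity
  · filter_upwards [eventually_gt_atTop 0] with x hx
    calc x * (x^2 + 1) ^ (-p) ≤ x * (x^2) ^ (-p) :=
          mul_le_mul_of_nonneg_left
            (Real.rpow_le_rpow_of_nonpos (by positivity) (by linarith) (by linarith)) hx.le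
      _ = x ^ (1 - 2*p) := by
          rw [← Real.rpow_natCast x 2, ← Real.rpow_mul hx.le, Real.rpow_sub hx, Real.rpow_one,
            Nat.cast_ofNat, mul_neg, Real.rpow_neg hx.le, div_eq_mul_inv]
  · simpa [show -(2*p - 1) = 1 - 2*p by ring] using
      tendsto_rpow_neg_atTop (y := 2*p - 1) (by linarith)

lemma tendsto_mul_rpow_neg_sq_add_one_atBot (hp : 1/2 < p) :
    Tendsto (fun x : ℝ => x * (x^2 + 1) ^ (-p)) atBot (𝓝 0) := by
  have h := ((tendsto_mul_rpow_neg_sq_add_one_atTop hp).comp tendsto_neg_atBot_atTop).neg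
  simpa [Function.comp_def, neg_sq] using h

/-- Integration by parts: the derivative of `x (x² + 1)^(-p)` has integral zero. -/
lemma two_mul_integral_rpow_neg_sq_add_one_sub_one (hp : 1/2 < p) :
    2*p * ∫ x : ℝ, (x^2 + 1) ^ (-p - 1) = (2*p - 1) * ∫ x : ℝ, (x^2 + 1) ^ (-p) := by
  have hA := integrable_rpow_neg_sq_add_one hp
  have hB : Integrable fun x : ℝ => (x^2 + 1) ^ (-p - 1) := by
    simpa only [neg_add'] using integrable_rpow_neg_sq_add_one (p := p + 1) (by linarith)
  have hzero := integral_of_hasDerivAt_of_tendsto (hasDerivAt_mul_rpow_neg_sq_add_one p)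
    ((hA.const_mul _).add (hB.const_mul _)) (tendsto_mul_rpow_neg_sq_add_one_atBot hp)
    (tendsto_mul_rpow_neg_sq_add_one_atTop hp)
  rw [integral_add (hA.const_mul _) (hB.const_mul _), integral_const_mul,
    integral_const_mul] at hzero
  linarith

end PowerOfSqAddOne

lemma Bσ_eq_one_sub_half_mul_Aσ {σ : ℝ} (hσ0 : 0 < σ) (hσ2 : σ < 2) :
    Bσ σ = (1 - σ/2) * Aσ σ := by
  have h := two_mul_integral_rpow_neg_sq_add_one_sub_one (one_div_lt_one_div_of_lt hσ0 hσ2)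
  rw [← Aσ, ← Bσ] at h
  field_simp at h ⊢
  linarith

lemma neg_half_mul_deriv_Mass_sub_deriv_Mom (σ : ℝ) {c : ℝ} (hc : c ≠ 0) :
    -(c/2) * deriv (Mass σ) c - deriv (Mom σ) c
      = Mass σ c / 2
          - σ⁻¹ * ((1/2) * σ⁻¹ * (2*σ+2) ^ (1/σ) * Bσ σ) * c ^ (1/σ - 1) := by
  have hMass : HasDerivAt (Mass σ) (deriv (Mass σ) c) c :=
    ((Real.hasDerivAt_rpow_const (p := 1/σ - 1) (Or.inl hc)).const_mul _)
      |>.differentiableAt.hasDerivAt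
  have hMom : HasDerivAt (Mom σ)
      (-(1/2) * Mass σ c + -(c/2) * deriv (Mass σ) c
        + (1/2) * σ⁻¹ * (2*σ+2) ^ (1/σ) * Bσ σ * (1/σ * c ^ (1/σ - 1))) c :=
    (((hasDerivAt_id c).div_const 2).neg.mul hMass).add
      ((Real.hasDerivAt_rpow_const (Or.inl hc)).const_mul _)
  rw [hMom.deriv]
  ring

theorem stmt8 (σ c : ℝ) (hσ : σ ∈ Set.Ioo (1:ℝ) 2) (hc : 0 < c) :
    (-(c/2) * deriv (Mass σ) c - deriv (Mom σ) c
        = (1/4) * (σ^2)⁻¹ * (2*σ+2) ^ (1/σ) * (2*(σ-1)) * Aσ σ * c ^ (1/σ - 1))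
      ∧ 0 < -(c/2) * deriv (Mass σ) c - deriv (Mom σ) c := by
  obtain ⟨hσ1, hσ2⟩ := hσ
  have hσ0 : 0 < σ := by linarith
  have hA : 0 < Aσ σ := integral_rpow_neg_sq_add_one_pos (one_div_lt_one_div_of_lt hσ0 hσ2)
  have heq : -(c/2) * deriv (Mass σ) c - deriv (Mom σ) c
      = (1/4) * (σ^2)⁻¹ * (2*σ+2) ^ (1/σ) * (2*(σ-1)) * Aσ σ * c ^ (1/σ - 1) := by
    rw [neg_half_mul_deriv_Mass_sub_deriv_Mom σ hc.ne', Mass,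
      Bσ_eq_one_sub_half_mul_Aσ hσ0 hσ2]
    field_simp
    ring
  refine ⟨heq, heq ▸ ?_⟩
  have : 0 < σ - 1 := by linarith
  positivity
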